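/- Let ε > 0 and α ∈ ℂ with εα ≠ 2 and εα ≠ -2. Define Cosh_α(n) := (E_α(n) + E_{-α}(n))/2 and Sinh_α(n) := (E_α(n) - E_{-α}(n))/2. Then both x = Cosh_α and x = Sinh_α satisfy, for all n ∈ ℤ: (x(n+2) - 2x(n+1) + x(n))/ε² = α²·(x(n) + 2x(n+1) + x(n+2))/4. -/

import Mathlib

/-!
A geometric sequence `n ↦ r ^ n` solves the difference equation as soon as
`4 (r - 1)² = ε² α² (r + 1)²`. The Cayley transform `r = (1 + z) / (1 - z)` of
`z = εα/2` satisfies `r - 1 = z (r + 1)`, so both `E_α` and `E_{-α}` solve it, and the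
equation is linear, so their half-sum and half-difference do too.
-/

/-- The Cayley-exponential function on the time scale εℤ. -/
noncomputable def cayleyExp (ε : ℝ) (α : ℂ) (n : ℤ) : ℂ :=
  ((1 + (ε : ℂ) * α / 2) / (1 - (ε : ℂ) * α / 2)) ^ n

/-- The Cayley-hyperbolic cosine on εℤ. -/
noncomputable def cayleyCosh (ε : ℝ) (α : ℂ) (n : ℤ) : ℂ :=
  (cayleyExp ε α n + cayleyExp ε (-α) n) / 2

/-- The Cayley-hyperbolic sine on εℤ. -/
noncomputable def cayleySinh (ε : ℝ) (α : ℂ) (n : ℤ) : ℂ :=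
  (cayleyExp ε α n - cayleyExp ε (-α) n) / 2

section DoubleAverageEquation

variable {K : Type*} [Field K]

/-- `x^{ΔΔ} = α² ⟨⟨x⟩⟩` on the time scale `εℤ`, with `x n` the value at `t = nε`. -/
def SolvesDoubleAverageEq (ε α : K) (x : ℤ → K) : Prop :=
  ∀ n : ℤ, (x (n + 2) - 2 * x (n + 1) + x n) / ε ^ 2 = α ^ 2 * (x n + 2 * x (n + 1) + x (n + 2)) / 4

namespace SolvesDoubleAverageEq

variable {ε α : K} {x y : ℤ → K}

theorem add (hx : SolvesDoubleAverageEq ε α x) (hy : SolvesDoubleAverageEq ε α y) :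
    SolvesDoubleAverageEq ε α (fun n ↦ x n + y n) := fun n ↦ by
  linear_combination hx n + hy n

theorem sub (hx : SolvesDoubleAverageEq ε α x) (hy : SolvesDoubleAverageEq ε α y) :
    SolvesDoubleAverageEq ε α (fun n ↦ x n - y n) := fun n ↦ by
  linear_combination hx n - hy n

theorem div_const (hx : SolvesDoubleAverageEq ε α x) (c : K) :
    SolvesDoubleAverageEq ε α (fun n ↦ x n / c) := fun n ↦ by
  linear_combination hx n / c

end SolvesDoubleAverageEq

theorem solvesDoubleAverageEq_zpow [CharZero K] {ε α r : K} (hε : ε ≠ 0) (hr : r ≠ 0)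
    (hchar : 4 * (r - 1) ^ 2 = ε ^ 2 * α ^ 2 * (r + 1) ^ 2) :
    SolvesDoubleAverageEq ε α (fun n ↦ r ^ n) := fun n ↦ by
  dsimp only
  rw [zpow_add₀ hr, zpow_add₀ hr, div_eq_div_iff (pow_ne_zero 2 hε) (by norm_num),
    zpow_two, zpow_one]
  linear_combination r ^ n * hchar

theorem cayley_sub_one_eq_mul_add_one {z : K} (hz : 1 - z ≠ 0) :
    (1 + z) / (1 - z) - 1 = z * ((1 + z) / (1 - z) + 1) := by
  field_simp
  ring

end DoubleAverageEquation

theorem cayleyExp_solvesDoubleAverageEq {ε : ℝ} {α : ℂ} (hε : (ε : ℂ) ≠ 0)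
    (h2 : (ε : ℂ) * α ≠ 2) (h2' : (ε : ℂ) * α ≠ -2) :
    SolvesDoubleAverageEq (ε : ℂ) α (cayleyExp ε α) := by
  have hden : 1 - (ε : ℂ) * α / 2 ≠ 0 := fun h ↦ h2 (by linear_combination -2 * h)
  have hnum : 1 + (ε : ℂ) * α / 2 ≠ 0 := fun h ↦ h2' (by linear_combination 2 * h)
  have hcayley := cayley_sub_one_eq_mul_add_one hden
  set r := (1 + (ε : ℂ) * α / 2) / (1 - (ε : ℂ) * α / 2)
  refine solvesDoubleAverageEq_zpow hε (div_ne_zero hnum hden) ?_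
  linear_combination (4 * (r - 1) + 2 * (ε : ℂ) * α * (r + 1)) * hcayley

theorem stmt13 (ε : ℝ) (hε : 0 < ε) (α : ℂ)
    (h2 : (ε : ℂ) * α ≠ 2) (h2' : (ε : ℂ) * α ≠ -2) :
    ∀ n : ℤ,
      (cayleyCosh ε α (n + 2) - 2 * cayleyCosh ε α (n + 1) + cayleyCosh ε α n) / (ε : ℂ) ^ 2
        = α ^ 2 * (cayleyCosh ε α n + 2 * cayleyCosh ε α (n + 1) + cayleyCosh ε α (n + 2)) / 4 ∧
      (cayleySinh ε α (n + 2) - 2 * cayleySinh ε α (n + 1) + cayleySinh ε α n) / (ε : ℂ) ^ 2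
        = α ^ 2 * (cayleySinh ε α n + 2 * cayleySinh ε α (n + 1) + cayleySinh ε α (n + 2)) / 4 := by
  have hε0 : (ε : ℂ) ≠ 0 := Complex.ofReal_ne_zero.mpr hε.ne'
  have hpos := cayleyExp_solvesDoubleAverageEq hε0 h2 h2'
  have hneg : SolvesDoubleAverageEq (ε : ℂ) α (cayleyExp ε (-α)) := by
    simpa only [SolvesDoubleAverageEq, neg_sq] using cayleyExp_solvesDoubleAverageEq hε0
      (α := -α) (fun h ↦ h2' (by linear_combination -h)) (fun h ↦ h2 (by linear_combination -h))
  exact fun n ↦ ⟨(hpos.add hneg).div_const 2 n, (hpos.sub hneg).div_const 2 n⟩
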